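/- Let G=(V,E) be a finite simple bipartite graph and let 1 ≤ k ≤ |V|. Then ε_k(G) ≤ k²/4 + (2k−1)·√k. -/

import Mathlib

/-!
Let `P` be the orthogonal projection onto the span of eigenvectors of the `k` largest Laplacian
eigenvalues and `a v = P v v`. Then `ε_k = ½ ∑_{v ∼ w} (a v + a w - 1 - 2 P v w)`, where
`∑ a v = k` and `∑_{w ≠ v} (P v w)² = a v (1 - a v)`. By AM-GM every edge term is at most
`C a v a w + K (P v w)² ((1 - a v)⁻¹ + (1 - a w)⁻¹)`. Bipartiteness bounds `∑_{v ∼ w} a v a w`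
by `k² / 2`, and the row identity bounds the second sum by `2 k`. For `k = 1` one may take
`C = K = 1` since then `a v + a w ≤ 1`; for `k ≥ 2` a weight `γ = 20 / (21 √k)` in the AM-GM step
gives `C = 1 + γ² / (4 (1 - γ)²)`, `K = γ⁻¹`, and what is left is a polynomial inequality in `√k`.
-/

open Finset

/-- The sum of the `k` largest values of `ev` (with multiplicity), expressed as the
supremum over all `k`-element index subsets of the sum of the corresponding values. -/
noncomputable def sumKLargest {n : Type*} [Fintype n] (ev : n → ℝ) (k : ℕ) : ℝ :=
  sSup {x : ℝ | ∃ s : Finset n, s.card = k ∧ x = ∑ i ∈ s, ev i}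

/-- `ε_k(G) = λ_1(L(G)) + ⋯ + λ_k(L(G)) - |E(G)|`, where
`λ_1 ≥ λ_2 ≥ ⋯` are the eigenvalues of the Laplacian matrix of `G`. -/
noncomputable def epsK {V : Type*} [Fintype V] [DecidableEq V] (G : SimpleGraph V)
    [DecidableRel G.Adj] (k : ℕ) : ℝ :=
  sumKLargest (SimpleGraph.posSemidef_lapMatrix ℝ G).isHermitian.eigenvalues k
    - G.edgeFinset.card

open Matrix

lemma exists_card_eq_sumKLargest {n : Type*} [Fintype n] (ev : n → ℝ) {k : ℕ}
    (hk : k ≤ Fintype.card n) : ∃ s : Finset n, #s = k ∧ sumKLargest ev k = ∑ i ∈ s, ev i := by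
  classical
  have hset : {x : ℝ | ∃ s : Finset n, #s = k ∧ x = ∑ i ∈ s, ev i}
      = ↑((powersetCard k univ).image fun s => ∑ i ∈ s, ev i) := by
    ext x; simp [eq_comm]
  have hne : ((powersetCard k univ).image fun s => ∑ i ∈ s, ev i).Nonempty :=
    (powersetCard_nonempty.2 (by rwa [card_univ])).image _
  obtain ⟨s, hs, hsup⟩ := mem_image.1 (hset ▸ hne.csSup_mem)
  exact ⟨s, (mem_powersetCard.1 hs).2, hsup.symm⟩

section EdgeBounds

lemma neg_two_mul_le_sq_div_add (q : ℝ) {D : ℝ} (hD : 0 < D) : -(2 * q) ≤ q ^ 2 / D + D := by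
  rw [div_add' _ _ _ hD.ne', le_div_iff₀ hD]
  nlinarith [sq_nonneg (q + D)]

variable {a b q : ℝ}

lemma edge_bound_of_add_le_one (ha : q ^ 2 ≤ a * (1 - a)) (hb : q ^ 2 ≤ b * (1 - b))
    (hab : a + b ≤ 1) :
    a + b - 1 - 2 * q ≤ a * b + q ^ 2 * ((1 - a)⁻¹ + (1 - b)⁻¹) := by
  set α := 1 - a
  set β := 1 - b
  suffices -(α * β) - 2 * q ≤ q ^ 2 * (α⁻¹ + β⁻¹) by linarith
  rcases (show 0 ≤ α by nlinarith).eq_or_lt with hα0 | hα0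
  · obtain rfl : q = 0 := pow_eq_zero_iff two_ne_zero |>.1 (by rw [← hα0] at ha; nlinarith)
    simp [← hα0]
  rcases (show 0 ≤ β by nlinarith).eq_or_lt with hβ0 | hβ0
  · obtain rfl : q = 0 := pow_eq_zero_iff two_ne_zero |>.1 (by rw [← hβ0] at hb; nlinarith)
    simp [← hβ0]
  -- since `1 ≤ α + β`
  have hinv : (α * β)⁻¹ ≤ α⁻¹ + β⁻¹ := by
    rw [inv_add_inv hα0.ne' hβ0.ne', div_eq_mul_inv, mul_comm (α + β)]
    exact le_mul_of_one_le_right (by positivity) (by linarith)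
  have hamgm := neg_two_mul_le_sq_div_add q (mul_pos hα0 hβ0)
  rw [div_eq_mul_inv] at hamgm
  nlinarith [mul_le_mul_of_nonneg_left hinv (sq_nonneg q)]

lemma edge_bound_of_lt_one {γ : ℝ} (hγ0 : 0 < γ) (hγ1 : γ < 1)
    (ha : q ^ 2 ≤ a * (1 - a)) (hb : q ^ 2 ≤ b * (1 - b)) :
    a + b - 1 - 2 * q ≤ (1 + γ ^ 2 / (4 * (1 - γ) ^ 2)) * (a * b)
      + γ⁻¹ * (q ^ 2 * ((1 - a)⁻¹ + (1 - b)⁻¹)) := by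
  wlog hab : b ≤ a generalizing a b
  · have := this hb ha (by linarith)
    rw [mul_comm b, add_comm ((1 - b)⁻¹)] at this
    linarith
  set α := 1 - a
  set β := 1 - b
  set c := γ ^ 2 / (4 * (1 - γ) ^ 2)
  have hcab : 0 ≤ c * (a * b) := by
    have : 0 ≤ b := by nlinarith
    have : 0 ≤ a := by linarith
    positivity
  have hβ0 : 0 ≤ β := by nlinarith
  suffices -(α * β) - 2 * q ≤ c * (a * b) + γ⁻¹ * (q ^ 2 * (α⁻¹ + β⁻¹)) by linarith
  rcases (show 0 ≤ α by nlinarith).eq_or_lt with hα0 | hα0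
  · obtain rfl : q = 0 := pow_eq_zero_iff two_ne_zero |>.1 (by rw [← hα0] at ha; nlinarith)
    simpa [← hα0] using hcab
  -- AM-GM with weight `γ α`; the defect `γ α - α β` only matters when `α, β < γ`
  have hamgm := neg_two_mul_le_sq_div_add q (mul_pos hγ0 hα0)
  have hquot : q ^ 2 / (γ * α) ≤ γ⁻¹ * (q ^ 2 * (α⁻¹ + β⁻¹)) := calc
    q ^ 2 / (γ * α) = γ⁻¹ * (q ^ 2 * α⁻¹) := by rw [div_eq_mul_inv, mul_inv]; ring
    _ ≤ γ⁻¹ * (q ^ 2 * (α⁻¹ + β⁻¹)) := by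
      gcongr
      exact le_add_of_nonneg_right (inv_nonneg.mpr hβ0)
  have hdefect : γ * α - α * β ≤ c * (a * b) := by
    rcases le_or_gt γ β with hγβ | hβγ
    · nlinarith
    · have hc : c * (1 - γ) ^ 2 = γ ^ 2 / 4 := by
        have : 1 - γ ≠ 0 := by linarith
        simp only [c]; field_simp
      have hab' : (1 - γ) ^ 2 ≤ a * b := by
        rw [sq]; exact mul_le_mul (by linarith) (by linarith) (by linarith) (by linarith)
      nlinarith [mul_le_mul_of_nonneg_left hab' (by positivity : 0 ≤ c), sq_nonneg (α - γ / 2)]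
  linarith

end EdgeBounds

lemma numeric_bound {x : ℝ} (hx : 2 ≤ x ^ 2) (hx0 : 0 < x) :
    let γ := 20 / (21 * x)
    (1 + γ ^ 2 / (4 * (1 - γ) ^ 2)) * (x ^ 2) ^ 2 / 4 + γ⁻¹ * x ^ 2
      ≤ (x ^ 2) ^ 2 / 4 + (2 * x ^ 2 - 1) * x := by
  intro γ
  have hx' : 0 ≤ x - 7 / 5 := by nlinarith
  have ht : 0 < 21 * x - 20 := by linarith
  have hc : γ ^ 2 / (4 * (1 - γ) ^ 2) = 100 / (21 * x - 20) ^ 2 := by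
    simp only [γ]; field_simp; ring
  have hγ : γ⁻¹ = 21 * x / 20 := inv_div _ _
  have hpoly : 25 * x ^ 4 / (21 * x - 20) ^ 2 ≤ x * (19 * x ^ 2 - 20) / 20 := by
    rw [div_le_div_iff₀ (by positivity) (by norm_num)]
    nlinarith [pow_nonneg hx' 3, pow_nonneg hx' 4, mul_nonneg hx' hx']
  have hsplit : (1 + 100 / (21 * x - 20) ^ 2) * (x ^ 2) ^ 2 / 4
      = (x ^ 2) ^ 2 / 4 + 25 * x ^ 4 / (21 * x - 20) ^ 2 := by
    ring
  rw [hc, hγ, hsplit]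
  linarith

namespace Matrix

section Projection
variable {n : Type*} [Fintype n] {P : Matrix n n ℝ}

lemma IsSymm.sum_sq_row_eq_diag (hP : P.IsSymm) (hPP : IsIdempotentElem P) (v : n) :
    ∑ w, P v w ^ 2 = P v v := by
  conv_rhs => rw [← hPP.eq]
  simp only [mul_apply, sq]
  exact sum_congr rfl fun w _ => by rw [hP.apply v w]

lemma IsSymm.diag_nonneg (hP : P.IsSymm) (hPP : IsIdempotentElem P) (v : n) : 0 ≤ P v v :=
  hP.sum_sq_row_eq_diag hPP v ▸ sum_nonneg fun w _ => sq_nonneg (P v w)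

variable [DecidableEq n]

lemma IsSymm.sum_sq_offDiag_eq (hP : P.IsSymm) (hPP : IsIdempotentElem P) (v : n) :
    ∑ w ∈ univ.erase v, P v w ^ 2 = P v v * (1 - P v v) := by
  have := add_sum_erase univ (fun w => P v w ^ 2) (mem_univ v)
  rw [hP.sum_sq_row_eq_diag hPP] at this
  linarith

lemma IsSymm.sq_le_diag_mul_one_sub (hP : P.IsSymm) (hPP : IsIdempotentElem P) {v w : n}
    (hvw : v ≠ w) : P v w ^ 2 ≤ P v v * (1 - P v v) :=
  hP.sum_sq_offDiag_eq hPP v ▸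
    single_le_sum (fun u _ => sq_nonneg (P v u)) (mem_erase.2 ⟨hvw.symm, mem_univ w⟩)

lemma IsSymm.diag_le_one (hP : P.IsSymm) (hPP : IsIdempotentElem P) (v : n) : P v v ≤ 1 := by
  have := hP.sum_sq_offDiag_eq hPP v ▸ sum_nonneg fun w _ => sq_nonneg (P v w)
  nlinarith [hP.diag_nonneg hPP v]

lemma IsSymm.diag_add_diag_le_trace (hP : P.IsSymm) (hPP : IsIdempotentElem P) {v w : n}
    (hvw : v ≠ w) : P v v + P w w ≤ P.trace := by
  rw [← sum_pair (f := fun u => P u u) hvw]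
  exact sum_le_sum_of_subset_of_nonneg (subset_univ _) fun u _ _ => hP.diag_nonneg hPP u

end Projection

lemma isSymm_mul_transpose {n m : Type*} [Fintype m] (W : Matrix n m ℝ) : (W * Wᵀ).IsSymm := by
  simp [IsSymm, transpose_mul]

section Isometry
variable {n m : Type*} [Fintype n] [Fintype m] [DecidableEq m] {W : Matrix n m ℝ}

lemma isIdempotentElem_mul_transpose (hW : Wᵀ * W = 1) : IsIdempotentElem (W * Wᵀ) := by
  rw [IsIdempotentElem, Matrix.mul_assoc, ← Matrix.mul_assoc Wᵀ, hW, Matrix.one_mul]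

lemma trace_mul_transpose (hW : Wᵀ * W = 1) : (W * Wᵀ).trace = Fintype.card m := by
  rw [trace_mul_comm, hW, trace_one]

end Isometry

namespace IsHermitian
variable {n : Type*} [Fintype n] [DecidableEq n] {B : Matrix n n ℝ} (hB : B.IsHermitian)

noncomputable def eigenvectorCols (s : Finset n) : Matrix n s ℝ :=
  (hB.eigenvectorUnitary : Matrix n n ℝ).submatrix id Subtype.val

lemma transpose_mul_eigenvectorCols (s : Finset n) :
    (hB.eigenvectorCols s)ᵀ * hB.eigenvectorCols s = 1 := by
  have hU := Unitary.coe_star_mul_self hB.eigenvectorUnitary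
  rw [star_eq_conjTranspose, conjTranspose_eq_transpose_of_trivial] at hU
  rw [eigenvectorCols, transpose_submatrix, ← submatrix_mul _ _ _ id _ Function.bijective_id, hU]
  exact submatrix_one_embedding ⟨Subtype.val, Subtype.val_injective⟩

lemma sum_eigenvalues_eq (s : Finset n) :
    ∑ i ∈ s, hB.eigenvalues i
      = ∑ i, (hB.eigenvectorCols s)ᵀ i ⬝ᵥ (B *ᵥ (hB.eigenvectorCols s)ᵀ i) := by
  rw [← sum_coe_sort]
  refine sum_congr rfl fun i _ => ?_
  rw [hB.eigenvalues_eq]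
  simp only [RCLike.re_to_real, star_trivial]
  rfl

end IsHermitian

end Matrix

namespace SimpleGraph
variable {V : Type*} [Fintype V] (G : SimpleGraph V) [DecidableRel G.Adj]

lemma sum_adj_one : (∑ v, ∑ w, if G.Adj v w then (1 : ℝ) else 0) = 2 * #G.edgeFinset := by
  have h : ∑ v, (G.degree v : ℝ) = 2 * #G.edgeFinset := by
    exact_mod_cast G.sum_degrees_eq_twice_card_edges
  simpa only [degree_eq_sum_if_adj] using h

lemma sum_adj_mul_le_of_bipartite {A : Set V} (hA : ∀ u v, G.Adj u v → (u ∈ A ↔ v ∉ A))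
    {f : V → ℝ} (hf : ∀ v, 0 ≤ f v) :
    ∑ v, ∑ w, (if G.Adj v w then f v * f w else 0) ≤ (∑ v, f v) ^ 2 / 2 := by
  classical
  set g : V → ℝ := fun v => if v ∈ A then f v else 0
  set h : V → ℝ := fun v => if v ∈ A then 0 else f v
  have hgh : ∑ v, g v + ∑ v, h v = ∑ v, f v := by
    rw [← sum_add_distrib]
    exact sum_congr rfl fun v _ => by simp only [g, h]; split_ifs <;> ring
  calc ∑ v, ∑ w, (if G.Adj v w then f v * f w else 0)
      ≤ ∑ v, ∑ w, (g v * h w + h v * g w) := by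
        refine sum_le_sum fun v _ => sum_le_sum fun w _ => ?_
        by_cases hvw : G.Adj v w
        · have := hA v w hvw
          simp only [g, h, if_pos hvw]
          split_ifs <;> simp_all
        · simp only [g, h, if_neg hvw]
          split_ifs <;> simp [mul_nonneg (hf v) (hf w)]
    _ = 2 * (∑ v, g v) * ∑ v, h v := by
        simp only [sum_add_distrib, ← mul_sum, ← sum_mul]; ring
    _ ≤ (∑ v, f v) ^ 2 / 2 := by
        rw [← hgh]; nlinarith [sq_nonneg (∑ v, g v - ∑ v, h v)]

variable [DecidableEq V]

lemma sum_lapMatrix_quadForm {m : Type*} [Fintype m] (W : Matrix V m ℝ) :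
    ∑ i, Wᵀ i ⬝ᵥ (G.lapMatrix ℝ *ᵥ Wᵀ i) = (∑ v, ∑ w, if G.Adj v w then
      (W * Wᵀ) v v + (W * Wᵀ) w w - 2 * (W * Wᵀ) v w else 0) / 2 := by
  simp_rw [← toLinearMap₂'_apply', lapMatrix_toLinearMap₂', ← sum_div]
  rw [sum_comm]
  congr 1
  refine sum_congr rfl fun v _ => ?_
  rw [sum_comm]
  refine sum_congr rfl fun w _ => ?_
  split_ifs
  · simp only [mul_apply, transpose_apply, mul_sum, ← sum_add_distrib, ← sum_sub_distrib]
    exact sum_congr rfl fun i _ => by ring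
  · simp

lemma exists_epsK_eq {k : ℕ} (hk : k ≤ Fintype.card V) :
    ∃ P : Matrix V V ℝ, P.IsSymm ∧ IsIdempotentElem P ∧ P.trace = k ∧
      epsK G k = (∑ v, ∑ w, if G.Adj v w then P v v + P w w - 1 - 2 * P v w else 0) / 2 := by
  set hL := (posSemidef_lapMatrix ℝ G).isHermitian
  obtain ⟨s, hs, hsum⟩ := exists_card_eq_sumKLargest hL.eigenvalues hk
  set W := hL.eigenvectorCols s
  have hW := hL.transpose_mul_eigenvectorCols s
  refine ⟨W * Wᵀ, isSymm_mul_transpose W, isIdempotentElem_mul_transpose hW,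
    by rw [trace_mul_transpose hW, Fintype.card_coe, hs], ?_⟩
  have hE : (#G.edgeFinset : ℝ) = (∑ v, ∑ w, if G.Adj v w then (1 : ℝ) else 0) / 2 := by
    rw [G.sum_adj_one]; ring
  rw [epsK, hsum, hL.sum_eigenvalues_eq, sum_lapMatrix_quadForm, hE, ← sub_div]
  simp only [← sum_sub_distrib]
  congr 1
  refine sum_congr rfl fun v _ => sum_congr rfl fun w _ => ?_
  split_ifs <;> ring

lemma sum_adj_sq_mul_inv_le {P : Matrix V V ℝ} (hP : P.IsSymm) (hPP : IsIdempotentElem P) :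
    ∑ v, ∑ w, (if G.Adj v w then P v w ^ 2 * ((1 - P v v)⁻¹ + (1 - P w w)⁻¹) else 0)
      ≤ 2 * P.trace := by
  have hrow (v : V) : ∑ w, (if G.Adj v w then P v w ^ 2 * (1 - P v v)⁻¹ else 0) ≤ P v v := by
    have hsub : ∑ w, (if G.Adj v w then P v w ^ 2 else 0) ≤ P v v * (1 - P v v) := by
      rw [← hP.sum_sq_offDiag_eq hPP v, ← sum_filter]
      exact sum_le_sum_of_subset_of_nonneg (fun w hw => by simp_all [ne_comm, G.ne_of_adj])
        fun w _ _ => sq_nonneg _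
    calc ∑ w, (if G.Adj v w then P v w ^ 2 * (1 - P v v)⁻¹ else 0)
        = (∑ w, if G.Adj v w then P v w ^ 2 else 0) * (1 - P v v)⁻¹ := by
          simp only [sum_mul, ite_zero_mul]
      _ ≤ P v v * (1 - P v v) * (1 - P v v)⁻¹ := by
          gcongr
          exact inv_nonneg.2 (sub_nonneg.2 (hP.diag_le_one hPP v))
      _ ≤ P v v := by
          rcases eq_or_ne (1 - P v v) 0 with h | h
          · simp [h, hP.diag_nonneg hPP v]
          · rw [mul_inv_cancel_right₀ h]
  have hswap : ∑ v, ∑ w, (if G.Adj v w then P v w ^ 2 * (1 - P w w)⁻¹ else 0)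
      = ∑ v, ∑ w, (if G.Adj v w then P v w ^ 2 * (1 - P v v)⁻¹ else 0) := by
    rw [sum_comm]
    simp_rw [G.adj_comm, hP.apply]
  calc ∑ v, ∑ w, (if G.Adj v w then P v w ^ 2 * ((1 - P v v)⁻¹ + (1 - P w w)⁻¹) else 0)
      = 2 * ∑ v, ∑ w, (if G.Adj v w then P v w ^ 2 * (1 - P v v)⁻¹ else 0) := by
        simp only [mul_add, ite_add_zero, sum_add_distrib, hswap]; ring
    _ ≤ 2 * P.trace := by
        gcongr
        exact sum_le_sum fun v _ => hrow v

variable {G}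

lemma sum_adj_le_of_edge_bound {A : Set V} (hA : ∀ u v, G.Adj u v → (u ∈ A ↔ v ∉ A))
    {P : Matrix V V ℝ} (hP : P.IsSymm) (hPP : IsIdempotentElem P) {C K : ℝ} (hC : 0 ≤ C)
    (hK : 0 ≤ K) (hedge : ∀ v w, G.Adj v w → P v v + P w w - 1 - 2 * P v w
      ≤ C * (P v v * P w w) + K * (P v w ^ 2 * ((1 - P v v)⁻¹ + (1 - P w w)⁻¹))) :
    (∑ v, ∑ w, if G.Adj v w then P v v + P w w - 1 - 2 * P v w else 0) / 2
      ≤ C * P.trace ^ 2 / 4 + K * P.trace := by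
  have hsum : (∑ v, ∑ w, if G.Adj v w then P v v + P w w - 1 - 2 * P v w else 0)
      ≤ C * (P.trace ^ 2 / 2) + K * (2 * P.trace) := calc
    _ ≤ ∑ v, ∑ w, (C * (if G.Adj v w then P v v * P w w else 0) + K *
          (if G.Adj v w then P v w ^ 2 * ((1 - P v v)⁻¹ + (1 - P w w)⁻¹) else 0)) := by
        refine sum_le_sum fun v _ => sum_le_sum fun w _ => ?_
        split_ifs with hvw
        · exact hedge v w hvw
        · simp
    _ = C * ∑ v, ∑ w, (if G.Adj v w then P v v * P w w else 0) + K *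
          ∑ v, ∑ w, (if G.Adj v w then P v w ^ 2 * ((1 - P v v)⁻¹ + (1 - P w w)⁻¹) else 0) := by
        simp only [sum_add_distrib, mul_sum]
    _ ≤ C * (P.trace ^ 2 / 2) + K * (2 * P.trace) := by
        gcongr
        · exact G.sum_adj_mul_le_of_bipartite hA (hP.diag_nonneg hPP)
        · exact G.sum_adj_sq_mul_inv_le hP hPP
  linarith

lemma sum_adj_le_of_bipartite {A : Set V} (hA : ∀ u v, G.Adj u v → (u ∈ A ↔ v ∉ A))
    {P : Matrix V V ℝ} (hP : P.IsSymm) (hPP : IsIdempotentElem P) {k : ℕ} (hk : 1 ≤ k)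
    (htr : P.trace = k) :
    (∑ v, ∑ w, if G.Adj v w then P v v + P w w - 1 - 2 * P v w else 0) / 2
      ≤ (k : ℝ) ^ 2 / 4 + (2 * (k : ℝ) - 1) * Real.sqrt k := by
  have hsq {v w : V} (h : G.Adj v w) : P v w ^ 2 ≤ P v v * (1 - P v v) :=
    hP.sq_le_diag_mul_one_sub hPP h.ne
  have hsq' {v w : V} (h : G.Adj v w) : P v w ^ 2 ≤ P w w * (1 - P w w) :=
    hP.apply w v ▸ hP.sq_le_diag_mul_one_sub hPP h.ne'
  rcases hk.eq_or_lt with rfl | hk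
  · refine (sum_adj_le_of_edge_bound hA hP hPP zero_le_one zero_le_one fun v w h => ?_).trans
      (by norm_num [htr])
    rw [one_mul, one_mul]
    refine edge_bound_of_add_le_one (hsq h) (hsq' h) ?_
    simpa [htr] using hP.diag_add_diag_le_trace hPP h.ne
  · set x := Real.sqrt k
    have hx0 : 0 < x := Real.sqrt_pos.2 (by positivity)
    have hx2 : x ^ 2 = k := Real.sq_sqrt (Nat.cast_nonneg k)
    have hγ0 : 0 < 20 / (21 * x) := by positivity
    have hγ1 : 20 / (21 * x) < 1 := by
      rw [div_lt_one (by positivity)]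
      nlinarith [show (2 : ℝ) ≤ k by exact_mod_cast hk]
    refine (sum_adj_le_of_edge_bound hA hP hPP (by positivity) (by positivity) fun v w h =>
      edge_bound_of_lt_one hγ0 hγ1 (hsq h) (hsq' h)).trans ?_
    have := numeric_bound (x := x) (by rw [hx2]; exact_mod_cast hk) hx0
    rw [hx2] at this
    rw [htr]
    exact this

end SimpleGraph

theorem stmt_19 {V : Type*} [Fintype V] [DecidableEq V] (G : SimpleGraph V)
    [DecidableRel G.Adj]
    (hbip : ∃ A : Set V, ∀ u v : V, G.Adj u v → (u ∈ A ↔ v ∉ A))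
    (k : ℕ) (hk1 : 1 ≤ k) (hkn : k ≤ Fintype.card V) :
    epsK G k ≤ (k : ℝ) ^ 2 / 4 + (2 * (k : ℝ) - 1) * Real.sqrt k := by
  obtain ⟨A, hA⟩ := hbip
  obtain ⟨P, hP, hPP, htr, heps⟩ := G.exists_epsK_eq hkn
  rw [heps]
  exact SimpleGraph.sum_adj_le_of_bipartite hA hP hPP hk1 htr
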